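/- arXiv:2310.01137 — 5 statements merged into one kernel-verified Lean document; each statement's English description precedes it below -/
import Mathlib

section
/- For each nonnegative integer k, the restriction of the quaternionic exponential to the open set 𝒰_k = {q ∈ ℍ : kπ < |q_v| < (k+1)π} is injective, with image contained in ℍ \ ℝ. -/
/-!
Writing `q = a + v` with `a` real and `v` imaginary, `exp q = eᵃ (cos ‖v‖ + sin ‖v‖ · v / ‖v‖)`.
The norm of `exp q` determines `a`, its real part then determines `cos ‖v‖`, which pins down `‖v‖`
because `cos` is injective on `(kπ, (k+1)π)`; there `sin ‖v‖ ≠ 0`, so the imaginary part of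
`exp q` is a nonzero multiple of `v` and recovers `v`.
-/

open Set

namespace Real

theorem sin_ne_zero_of_mem_Ioo_int_mul_pi {k : ℤ} {x : ℝ}
    (hx : x ∈ Ioo (k * π) ((k + 1) * π)) : sin x ≠ 0 := by
  intro h
  have hpos : 0 < sin (x - k * π) :=
    sin_pos_of_pos_of_lt_pi (by linarith [hx.1]) (by linarith [hx.2])
  rw [sin_sub_int_mul_pi, h, mul_zero] at hpos
  exact hpos.false

theorem injOn_cos_Ioo_int_mul_pi (k : ℤ) : InjOn cos (Ioo (k * π) ((k + 1) * π)) := by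
  intro x ⟨hx₁, hx₂⟩ y ⟨hy₁, hy₂⟩ h
  have hshift : cos (x - k * π) = cos (y - k * π) := by
    rw [cos_sub_int_mul_pi, cos_sub_int_mul_pi, h]
  exact sub_left_injective <|
    injOn_cos ⟨by linarith, by linarith⟩ ⟨by linarith, by linarith⟩ hshift

end Real

namespace Quaternion

open NormedSpace

theorem re_eq_of_exp_eq {p q : ℍ[ℝ]} (h : exp p = exp q) : p.re = q.re := by
  have hnorm := congrArg norm h
  rw [norm_exp, norm_exp, ← Real.exp_eq_exp_ℝ, Real.norm_of_nonneg (Real.exp_pos _).le,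
    Real.norm_of_nonneg (Real.exp_pos _).le] at hnorm
  exact Real.exp_injective hnorm

theorem cos_norm_im_eq_of_exp_eq {p q : ℍ[ℝ]} (h : exp p = exp q) :
    Real.cos ‖p.im‖ = Real.cos ‖q.im‖ := by
  have hre := congrArg (·.re) h
  rw [re_exp, re_exp, sub_re_self, sub_re_self, re_eq_of_exp_eq h] at hre
  exact mul_left_cancel₀ (by rw [← Real.exp_eq_exp_ℝ]; exact Real.exp_ne_zero _) hre

theorem norm_im_ne_zero_of_sin_ne_zero {q : ℍ[ℝ]} (hs : Real.sin ‖q.im‖ ≠ 0) : ‖q.im‖ ≠ 0 :=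
  ne_of_apply_ne Real.sin (by rwa [Real.sin_zero])

theorem exp_re_mul_sin_div_ne_zero {q : ℍ[ℝ]} (hs : Real.sin ‖q.im‖ ≠ 0) :
    exp q.re * (Real.sin ‖q.im‖ / ‖q.im‖) ≠ 0 := by
  rw [← Real.exp_eq_exp_ℝ]
  exact mul_ne_zero (Real.exp_ne_zero _) (div_ne_zero hs (norm_im_ne_zero_of_sin_ne_zero hs))

theorem im_exp_ne_zero {q : ℍ[ℝ]} (hs : Real.sin ‖q.im‖ ≠ 0) : (exp q).im ≠ 0 := by
  rw [im_exp]
  exact smul_ne_zero (exp_re_mul_sin_div_ne_zero hs)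
    (norm_ne_zero_iff.mp (norm_im_ne_zero_of_sin_ne_zero hs))

theorem eq_of_exp_eq_of_norm_im_eq {p q : ℍ[ℝ]} (h : exp p = exp q) (hn : ‖p.im‖ = ‖q.im‖)
    (hs : Real.sin ‖q.im‖ ≠ 0) : p = q := by
  have hre := re_eq_of_exp_eq h
  have him := congrArg (·.im) h
  rw [im_exp, im_exp, hre, hn] at him
  rw [← re_add_im p, ← re_add_im q, hre,
    smul_right_injective _ (exp_re_mul_sin_div_ne_zero hs) him]

end Quaternion

theorem exp_injOn_Uk (k : ℕ) :
    (∀ p q : Quaternion ℝ,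
        (k * Real.pi < ‖p.im‖ ∧ ‖p.im‖ < (k + 1) * Real.pi) →
        (k * Real.pi < ‖q.im‖ ∧ ‖q.im‖ < (k + 1) * Real.pi) →
        NormedSpace.exp p = NormedSpace.exp q → p = q) ∧
      ∀ q : Quaternion ℝ, (k * Real.pi < ‖q.im‖ ∧ ‖q.im‖ < (k + 1) * Real.pi) →
        (NormedSpace.exp q).im ≠ 0 := by
  have hUk : ∀ q : Quaternion ℝ, (k * Real.pi < ‖q.im‖ ∧ ‖q.im‖ < (k + 1) * Real.pi) →
      ‖q.im‖ ∈ Ioo (((k : ℤ) : ℝ) * Real.pi) ((((k : ℤ) : ℝ) + 1) * Real.pi) := by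
    intro q hq
    exact_mod_cast hq
  refine ⟨fun p q hp hq h => ?_, fun q hq => ?_⟩
  · exact Quaternion.eq_of_exp_eq_of_norm_im_eq h
      (Real.injOn_cos_Ioo_int_mul_pi k (hUk p hp) (hUk q hq)
        (Quaternion.cos_norm_im_eq_of_exp_eq h))
      (Real.sin_ne_zero_of_mem_Ioo_int_mul_pi (hUk q hq))
  · exact Quaternion.im_exp_ne_zero (Real.sin_ne_zero_of_mem_Ioo_int_mul_pi (hUk q hq))
end

section
/- The quaternionic exponential restricted to 𝒰_k = {q ∈ ℍ : kπ < |q_v| < (k+1)π} is surjective onto ℍ \ ℝ: for every non-real quaternion w and every k ∈ ℕ there exists q with kπ < |q_v| < (k+1)π and exp(q) = w. -/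
/-!
A non-real quaternion `w` lies in the copy `ℝ + ℝu` of `ℂ` spanned by the unit pure quaternion
`u = w_v / |w_v|`, and on every such copy the quaternionic exponential restricts to the complex
one. So it suffices to solve `exp z = w.re + |w_v| i` in `ℂ` with `kπ < |Im z| < (k+1)π`: the
argument of the right-hand side lies in `(0, π)`, and adding a suitable multiple of `2πi` to its
principal logarithm moves `|Im z|` into any of the strips.
-/

open Quaternion Real

theorem Real.sin_abs_div_abs_mul (x : ℝ) : sin |x| / |x| * x = sin x := by
  rcases eq_or_ne x 0 with rfl | hx
  · simp
  rw [div_mul_eq_mul_div, div_eq_iff (abs_ne_zero.2 hx)]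
  rcases abs_cases x with ⟨habs, -⟩ | ⟨habs, -⟩ <;> simp [habs]

theorem exists_abs_add_int_mul_two_pi_mem_Ioo {θ : ℝ} (hθ₀ : 0 < θ) (hθπ : θ < π) (k : ℕ) :
    ∃ n : ℤ, |θ + n * (2 * π)| ∈ Set.Ioo (k * π) ((k + 1) * π) := by
  obtain ⟨m, rfl | rfl⟩ := Nat.even_or_odd' k
  · refine ⟨m, ?_⟩
    rw [abs_of_pos (by positivity)]
    push_cast
    constructor <;> linarith
  · refine ⟨-(m + 1), ?_⟩
    rw [abs_of_neg (by push_cast; nlinarith [pi_pos])]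
    push_cast
    constructor <;> linarith

theorem Complex.exists_exp_eq_abs_im_mem_Ioo {ζ : ℂ} (hζ : 0 < ζ.im) (k : ℕ) :
    ∃ z : ℂ, Complex.exp z = ζ ∧ |z.im| ∈ Set.Ioo (k * π) ((k + 1) * π) := by
  have harg₀ : 0 < ζ.arg :=
    (Complex.arg_nonneg_iff.2 hζ.le).lt_of_ne' fun h => hζ.ne' (Complex.arg_eq_zero_iff.1 h).2
  have hargπ : ζ.arg < π := Complex.arg_lt_pi_iff.2 (Or.inr hζ.ne')
  obtain ⟨n, hn⟩ := exists_abs_add_int_mul_two_pi_mem_Ioo harg₀ hargπ k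
  refine ⟨Complex.log ζ + n * (2 * π * Complex.I), ?_, ?_⟩
  · rw [Complex.exp_periodic.int_mul n, Complex.exp_log (by rintro rfl; simp at hζ)]
  · simpa [Complex.log_im] using hn

namespace Quaternion

variable {u : ℍ[ℝ]}

theorem im_coe_add_smul (hu_re : u.re = 0) (r t : ℝ) : (↑r + t • u : ℍ[ℝ]).im = t • u := by
  simp [Quaternion.ext_iff, hu_re]

theorem exp_coe_add_smul (hu_re : u.re = 0) (hu_norm : ‖u‖ = 1) (z : ℂ) :
    NormedSpace.exp (↑z.re + z.im • u : ℍ[ℝ]) = ↑(Complex.exp z).re + (Complex.exp z).im • u := by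
  have hre : (↑z.re + z.im • u : ℍ[ℝ]).re = z.re := by simp [hu_re]
  rw [exp_eq, im_coe_add_smul hu_re, hre, norm_smul, hu_norm, mul_one, Real.norm_eq_abs,
    cos_abs, smul_smul, sin_abs_div_abs_mul, Complex.exp_re, Complex.exp_im, ← exp_eq_exp_ℝ,
    smul_add, smul_coe, smul_smul]

end Quaternion

theorem exp_surjOn_Uk (w : Quaternion ℝ) (hw : w.im ≠ 0) (k : ℕ) :
    ∃ q : Quaternion ℝ, k * Real.pi < ‖q.im‖ ∧ ‖q.im‖ < (k + 1) * Real.pi ∧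
      NormedSpace.exp q = w := by
  have hw_im_pos : 0 < ‖w.im‖ := norm_pos_iff.2 hw
  set u : ℍ[ℝ] := ‖w.im‖⁻¹ • w.im
  have hu_re : u.re = 0 := by simp [u]
  have hu_norm : ‖u‖ = 1 := by simp [u, norm_smul, hw_im_pos.ne']
  obtain ⟨z, hz, hk, hk'⟩ := Complex.exists_exp_eq_abs_im_mem_Ioo (ζ := ⟨w.re, ‖w.im‖⟩) hw_im_pos k
  have hq_im : ‖(↑z.re + z.im • u : ℍ[ℝ]).im‖ = |z.im| := by
    rw [im_coe_add_smul hu_re, norm_smul, hu_norm, mul_one, Real.norm_eq_abs]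
  refine ⟨↑z.re + z.im • u, hq_im ▸ hk, hq_im ▸ hk', ?_⟩
  rw [exp_coe_add_smul hu_re hu_norm, hz, smul_inv_smul₀ hw_im_pos.ne', re_add_im]
end

section
/- For the map 𝔢(u₀, u₁) = (e^{u₀} cos u₁, e^{u₀} sin u₁) on ℂ², one has 𝔢(u₀, u₁) = 𝔢(u₀', u₁') if and only if there exist integers h₁, h₂ with u₀' = u₀ + (h₁ + h₂)𝕚π and u₁' = u₁ + (h₁ − h₂)π. -/
/-!
Since `(𝔢 u).1 ± (𝔢 u).2 𝕚 = exp (u₀ ± u₁ 𝕚)`, the point `𝔢 u` determines and is determined by the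
two exponentials `exp (u₀ + u₁ 𝕚)` and `exp (u₀ - u₁ 𝕚)`. Hence `𝔢 u = 𝔢 u'` exactly when
`u₀' ± u₁' 𝕚` differ from `u₀ ± u₁ 𝕚` by `2h₁π𝕚` and `2h₂π𝕚` respectively, and solving this linear
system for `u₀'` and `u₁'` finishes the proof.
-/

/-- The lift `𝔢` of the exponential to `ℂ²`. -/
noncomputable def frakE (u : ℂ × ℂ) : ℂ × ℂ :=
  (Complex.exp u.1 * Complex.cos u.2, Complex.exp u.1 * Complex.sin u.2)

open Complex

lemma frakE_fst_add_snd_mul_I (u : ℂ × ℂ) : (frakE u).1 + (frakE u).2 * I = exp (u.1 + u.2 * I) := by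
  rw [exp_add_mul_I, frakE]
  ring

lemma frakE_fst_sub_snd_mul_I (u : ℂ × ℂ) : (frakE u).1 - (frakE u).2 * I = exp (u.1 - u.2 * I) := by
  rw [show u.1 - u.2 * I = u.1 + -u.2 * I by ring, exp_add_mul_I, cos_neg, sin_neg, frakE]
  ring

namespace Complex

lemma add_mul_I_eq_and_sub_mul_I_eq_iff {a b a' b' : ℂ} :
    (a + b * I = a' + b' * I ∧ a - b * I = a' - b' * I) ↔ a = a' ∧ b = b' := by
  refine ⟨fun ⟨hadd, hsub⟩ => ⟨?_, ?_⟩, fun ⟨rfl, rfl⟩ => ⟨rfl, rfl⟩⟩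
  · linear_combination (hadd + hsub) / 2
  · refine mul_right_cancel₀ I_ne_zero ?_
    linear_combination (hadd - hsub) / 2

lemma add_mul_I_eq_add_and_sub_mul_I_eq_add_iff {x y x' y' : ℂ} (a b c : ℂ) :
    (x' + y' * I = x + y * I + a * (2 * c * I) ∧ x' - y' * I = x - y * I + b * (2 * c * I)) ↔
      x' = x + (a + b) * c * I ∧ y' = y + (a - b) * c := by
  constructor
  · rintro ⟨hadd, hsub⟩
    constructor
    · linear_combination (hadd + hsub) / 2
    · refine mul_right_cancel₀ I_ne_zero ?_
      linear_combination (hadd - hsub) / 2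
  · rintro ⟨hx, hy⟩
    exact ⟨by linear_combination hx + I * hy, by linear_combination hx - I * hy⟩

end Complex

lemma frakE_eq_iff_exp_eq (u u' : ℂ × ℂ) :
    frakE u = frakE u' ↔
      exp (u.1 + u.2 * I) = exp (u'.1 + u'.2 * I) ∧ exp (u.1 - u.2 * I) = exp (u'.1 - u'.2 * I) := by
  rw [← frakE_fst_add_snd_mul_I, ← frakE_fst_add_snd_mul_I, ← frakE_fst_sub_snd_mul_I,
    ← frakE_fst_sub_snd_mul_I, add_mul_I_eq_and_sub_mul_I_eq_iff, Prod.ext_iff]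

theorem frakE_fibers (u u' : ℂ × ℂ) :
    frakE u = frakE u' ↔ ∃ h₁ h₂ : ℤ,
      u'.1 = u.1 + ((h₁ + h₂ : ℤ) : ℂ) * (Real.pi : ℂ) * Complex.I ∧
      u'.2 = u.2 + ((h₁ - h₂ : ℤ) : ℂ) * (Real.pi : ℂ) := by
  rw [eq_comm, frakE_eq_iff_exp_eq, exp_eq_exp_iff_exists_int, exp_eq_exp_iff_exists_int,
    exists_and_exists_comm]
  push_cast
  simp only [add_mul_I_eq_add_and_sub_mul_I_eq_add_iff]
end

section
/- Let z = z₀ + z_v and w = w₀ + w_v in ℂ ⊗ ℍ with z₀² + ⟨z_v,z_v⟩ ≠ 0, w₀² + ⟨w_v,w_v⟩ ≠ 0, ⟨z_v,z_v⟩ ≠ 0 and ⟨w_v,w_v⟩ ≠ 0. Write w_v = w₁ z_v + w_⊥ with ⟨z_v, w_⊥⟩ = 0. Then the vector part of the product zw satisfies ⟨(zw)_v, (zw)_v⟩ = (z₀w₁ + w₀)² ⟨z_v,z_v⟩ + (z₀² + ⟨z_v,z_v⟩) ⟨w_⊥,w_⊥⟩. In particular ⟨(zw)_v,(zw)_v⟩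 = 0 if and only if w₀ = −z₀w₁ ± √−1·√((z₀² + ⟨z_v,z_v⟩)/⟨z_v,z_v⟩)·√(⟨w_⊥,w_⊥⟩) for some choice of complex square roots. -/
/-- Complex-bilinear form on the vector parts of complexified quaternions. -/
def dotv (z w : Quaternion ℂ) : ℂ :=
  z.imI * w.imI + z.imJ * w.imJ + z.imK * w.imK

theorem vector_part_of_product (z w : Quaternion ℂ)
    (hz : z.re ^ 2 + dotv z z ≠ 0) (hw : w.re ^ 2 + dotv w w ≠ 0)
    (hzv : dotv z z ≠ 0) (hwv : dotv w w ≠ 0)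
    (w₁ : ℂ) (wp : Quaternion ℂ) (hwp0 : wp.re = 0)
    (hdec : w.im = w₁ • z.im + wp) (hperp : dotv z wp = 0) :
    dotv (z * w) (z * w)
        = (z.re * w₁ + w.re) ^ 2 * dotv z z + (z.re ^ 2 + dotv z z) * dotv wp wp ∧
      (dotv (z * w) (z * w) = 0 ↔
        ∃ s t : ℂ, s ^ 2 = (z.re ^ 2 + dotv z z) / dotv z z ∧ t ^ 2 = dotv wp wp ∧
          (w.re = -z.re * w₁ + Complex.I * (s * t) ∨
            w.re = -z.re * w₁ - Complex.I * (s * t))) := by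
  have h1 : w.imI = w₁ * z.imI + wp.imI := by
    have := congrArg QuaternionAlgebra.imI hdec; simpa using this
  have h2 : w.imJ = w₁ * z.imJ + wp.imJ := by
    have := congrArg QuaternionAlgebra.imJ hdec; simpa using this
  have h3 : w.imK = w₁ * z.imK + wp.imK := by
    have := congrArg QuaternionAlgebra.imK hdec; simpa using this
  have key : dotv (z * w) (z * w)
      = (z.re * w₁ + w.re) ^ 2 * dotv z z + (z.re ^ 2 + dotv z z) * dotv wp wp := by
    simp only [dotv] at hperp ⊢
    simp only [Quaternion.imI_mul, Quaternion.imJ_mul, Quaternion.imK_mul, h1, h2, h3]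
    linear_combination (2 * (z.re * w₁ + w.re) * z.re
      - (z.imI * wp.imI + z.imJ * wp.imJ + z.imK * wp.imK)) * hperp
  refine ⟨key, ?_⟩
  rw [key]
  set Q := dotv z z with hQ
  set P := z.re ^ 2 + dotv z z with hP
  set D := dotv wp wp with hD
  set A := z.re * w₁ + w.re with hA
  constructor
  · intro h0
    obtain ⟨s, hs⟩ := IsAlgClosed.exists_pow_nat_eq (k := ℂ) (P / Q) zero_lt_two
    obtain ⟨t, ht⟩ := IsAlgClosed.exists_pow_nat_eq (k := ℂ) D zero_lt_two
    have hsq : s ^ 2 * Q = P := by rw [hs, div_mul_cancel₀ _ hzv]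
    have hfacQ : (A - Complex.I * (s * t)) * (A + Complex.I * (s * t)) * Q = 0 := by
      linear_combination h0 + t ^ 2 * hsq + P * ht - (s * t) ^ 2 * Q * Complex.I_sq
    rcases mul_eq_zero.mp hfacQ with hfac | hQ0
    · rcases mul_eq_zero.mp hfac with h | h
      · exact ⟨s, t, hs, ht, Or.inl (by linear_combination h)⟩
      · exact ⟨s, t, hs, ht, Or.inr (by linear_combination h)⟩
    · exact absurd hQ0 hzv
  · rintro ⟨s, t, hs, ht, hcase | hcase⟩ <;>
      have hsq : s ^ 2 * Q = P := by rw [hs, div_mul_cancel₀ _ hzv]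
    · rw [hA, hcase]
      linear_combination (s * t) ^ 2 * Q * Complex.I_sq - t ^ 2 * hsq - P * ht
    · rw [hA, hcase]
      linear_combination (s * t) ^ 2 * Q * Complex.I_sq - t ^ 2 * hsq - P * ht
end

section
/- Let q: ℝ → ℍ be a differentiable quaternionic curve with q_v(t) ≠ 0 for all t. Then exp(−q(t))·(d/dt) exp(q(t)) = q̇(t) + [1 − sin(2|q_v|)/(2|q_v|)]·[⟨q_v/|q_v|, q̇_v⟩·(q_v/|q_v|) − q̇_v] − [(1 − cos(2|q_v|))/(2|q_v|)]·(q_v/|q_v|) × q̇_v, where all quantities are evaluated at t. -/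
/-!
Write `q = a + v` with `a` real and `v` imaginary. Since `a` is central, `exp q = e^a exp v`, and
on imaginary quaternions `exp v = cos θ + sin θ • u` with `θ = ‖v‖`, `u = v / θ`. Differentiating
this closed form (with `θ' = ⟨u, v'⟩`) and multiplying by `exp (-v) = cos θ - sin θ • u`, the
computation reduces to `u * u = -1` and `u * w = u × w - ⟨u, w⟩` for imaginary `u`, `w`, together
with `2 sin θ cos θ = sin 2θ` and `2 sin² θ = 1 - cos 2θ`; the real part only contributes `a'`.
-/

/-- Euclidean inner product of the vector (imaginary) parts, via the basis i, j, k. -/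
noncomputable def qdot (a b : Quaternion ℝ) : ℝ :=
  a.imI * b.imI + a.imJ * b.imJ + a.imK * b.imK

/-- Cross product of the vector (imaginary) parts, via the basis i, j, k. -/
noncomputable def qcross (a b : Quaternion ℝ) : Quaternion ℝ :=
  ⟨0, a.imJ * b.imK - a.imK * b.imJ, a.imK * b.imI - a.imI * b.imK,
    a.imI * b.imJ - a.imJ * b.imI⟩

open Quaternion NormedSpace
open scoped RealInnerProductSpace

theorem HasDerivAt.norm {F : Type*} [NormedAddCommGroup F] [InnerProductSpace ℝ F]
    {f : ℝ → F} {f' : F} {x : ℝ} (hf : HasDerivAt f f' x) (h0 : f x ≠ 0) :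
    HasDerivAt (fun y => ‖f y‖) (⟪f x, f'⟫ / ‖f x‖) x := by
  have h := hf.norm_sq.sqrt (by positivity)
  simp only [Real.sqrt_sq (norm_nonneg _)] at h
  convert h using 1
  field_simp

theorem HasDerivAt.quaternion_re {q : ℝ → ℍ} {d : ℍ} {t : ℝ} (h : HasDerivAt q d t) :
    HasDerivAt (fun s => (q s).re) d.re t :=
  let re : ℍ →L[ℝ] ℝ := LinearMap.toContinuousLinearMap (QuaternionAlgebra.reₗ _ _ _)
  re.hasFDerivAt.comp_hasDerivAt t h

theorem HasDerivAt.quaternion_im {q : ℝ → ℍ} {d : ℍ} {t : ℝ} (h : HasDerivAt q d t) :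
    HasDerivAt (fun s => (q s).im) d.im t := by
  have := h.sub (h.quaternion_re.smul_const (1 : ℍ))
  simpa only [Pi.sub_def, ← Algebra.algebraMap_eq_smul_one, algebraMap_def, sub_re_self] using this

theorem Quaternion.inner_eq_re_mul_re_add_qdot (a b : ℍ) : ⟪a, b⟫ = a.re * b.re + qdot a b := by
  simp only [inner_def, re_mul, re_star, imI_star, imJ_star, imK_star, qdot]
  ring

theorem qdot_smul_left (r : ℝ) (a b : ℍ) : qdot (r • a) b = r * qdot a b := by
  simp only [qdot, imI_smul, imJ_smul, imK_smul, smul_eq_mul]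
  ring

theorem qdot_self_of_re_eq_zero {a : ℍ} (ha : a.re = 0) : qdot a a = ‖a‖ ^ 2 := by
  rw [← real_inner_self_eq_norm_sq, inner_eq_re_mul_re_add_qdot, ha, zero_mul, zero_add]

theorem qcross_self (a : ℍ) : qcross a a = 0 := by
  ext <;> simp only [qcross, re_zero, imI_zero, imJ_zero, imK_zero] <;> ring

theorem mul_eq_qcross_sub_qdot_smul_one {a b : ℍ} (ha : a.re = 0) (hb : b.re = 0) :
    a * b = qcross a b - qdot a b • 1 := by
  ext <;>
    simp only [re_mul, imI_mul, imJ_mul, imK_mul, re_sub, imI_sub, imJ_sub, imK_sub, re_smul,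
      imI_smul, imJ_smul, imK_smul, re_one, imI_one, imJ_one, imK_one, smul_eq_mul, qdot, ha,
      hb] <;>
    simp only [qcross] <;> ring

theorem cos_sub_sin_smul_mul_eq {u w : ℍ} (hu : u.re = 0) (hu1 : ‖u‖ = 1) (hw : w.re = 0)
    (θ : ℝ) :
    (Real.cos θ • 1 - Real.sin θ • u) *
        ((-(Real.sin θ * qdot u w)) • 1 + ((Real.cos θ - Real.sin θ / θ) * qdot u w) • u
          + (Real.sin θ / θ) • w) =
      w + (1 - Real.sin (2 * θ) / (2 * θ)) • (qdot u w • u - w)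
        - ((1 - Real.cos (2 * θ)) / (2 * θ)) • qcross u w := by
  have huu : u * u = -1 := by
    rw [mul_eq_qcross_sub_qdot_smul_one hu hu, qcross_self, qdot_self_of_re_eq_zero hu, hu1]
    simp
  have huw := mul_eq_qcross_sub_qdot_smul_one hu hw
  simp only [sub_mul, mul_add, smul_mul_smul_comm, one_mul, mul_one, huu, huw, Real.sin_two_mul,
    Real.cos_two_mul]
  match_scalars <;> ring_nf <;> rw [Real.cos_sq'] <;> ring

theorem Quaternion.exp_mul_exp_neg (x : ℍ) : exp x * exp (-x) = 1 := by
  let : NormedAlgebra ℚ ℍ := .restrictScalars ℚ ℝ ℍ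
  rw [← exp_add_of_commute (Commute.refl x).neg_right, add_neg_cancel, exp_zero]

theorem Quaternion.exp_neg_mul_exp (x : ℍ) : exp (-x) * exp x = 1 := by
  simpa using exp_mul_exp_neg (-x)

theorem Quaternion.exp_eq_exp_re_smul_exp_im (q : ℍ) : exp q = Real.exp q.re • exp q.im := by
  rw [Quaternion.exp_eq, exp_of_re_eq_zero q.im q.re_im, Real.exp_eq_exp_ℝ]

/-- `exp (-v) * (d/ds) exp (v s)` along an imaginary curve through `v` with velocity `w`. -/
noncomputable def dexpIm (v w : ℍ) : ℍ :=
  w + (1 - Real.sin (2 * ‖v‖) / (2 * ‖v‖)) • (qdot (‖v‖⁻¹ • v) w • (‖v‖⁻¹ • v) - w)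
    - ((1 - Real.cos (2 * ‖v‖)) / (2 * ‖v‖)) • qcross (‖v‖⁻¹ • v) w

theorem hasDerivAt_exp_of_re_eq_zero {v : ℝ → ℍ} {w : ℍ} {t : ℝ} (hv : HasDerivAt v w t)
    (hre : ∀ s, (v s).re = 0) (h0 : v t ≠ 0) :
    HasDerivAt (fun s => exp (v s)) (exp (v t) * dexpIm (v t) w) t := by
  set θ := ‖v t‖ with hθ_def
  set u := θ⁻¹ • v t with hu_def
  have hθ : θ ≠ 0 := norm_ne_zero_iff.mpr h0
  have hu : u.re = 0 := by simp only [hu_def, re_smul, hre, smul_zero]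
  have hu1 : ‖u‖ = 1 := norm_smul_inv_norm h0
  have hw : w.re = 0 := by
    have h := hv.quaternion_re
    simp only [hre] at h
    exact (hasDerivAt_const t (0 : ℝ)).unique h |>.symm
  have hnorm : HasDerivAt (fun s => ‖v s‖) (qdot u w) t := by
    convert hv.norm h0 using 1
    rw [inner_eq_re_mul_re_add_qdot, hre, zero_mul, zero_add, hu_def, qdot_smul_left,
      inv_mul_eq_div]
  have hexp : ∀ x : ℍ, x.re = 0 → exp x = Real.cos ‖x‖ • 1 + (Real.sin ‖x‖ / ‖x‖) • x :=
    fun x hx => by rw [exp_of_re_eq_zero x hx, ← Algebra.algebraMap_eq_smul_one]; rfl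
  have hexp_neg : exp (-v t) = Real.cos θ • 1 - Real.sin θ • u := by
    rw [hexp _ (by simp [hre]), norm_neg, hu_def, smul_smul, div_eq_mul_inv, smul_neg,
      sub_eq_add_neg]
  have hderiv := (hnorm.cos.smul_const (1 : ℍ)).add ((hnorm.sin.div hnorm hθ).smul hv)
  simp only [hexp _ (hre _)]
  refine hderiv.congr_deriv ?_
  rw [Pi.div_apply, ← hexp (v t) (hre t), dexpIm, ← hθ_def, ← hu_def,
    ← cos_sub_sin_smul_mul_eq hu hu1 hw θ, ← hexp_neg, ← mul_assoc, exp_mul_exp_neg, one_mul,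
    hu_def]
  match_scalars <;> field_simp

theorem HasDerivAt.quaternion_exp {q : ℝ → ℍ} {d : ℍ} {t : ℝ} (hq : HasDerivAt q d t)
    (h0 : (q t).im ≠ 0) :
    HasDerivAt (fun s => NormedSpace.exp (q s))
      (NormedSpace.exp (q t) * ((d.re : ℍ) + dexpIm (q t).im d.im)) t := by
  have h : HasDerivAt (fun s => Real.exp (q s).re • NormedSpace.exp (q s).im) _ t :=
    hq.quaternion_re.exp.smul
      (hasDerivAt_exp_of_re_eq_zero hq.quaternion_im (fun s => (q s).re_im) h0)
  simp only [← exp_eq_exp_re_smul_exp_im] at h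
  refine h.congr_deriv ?_
  rw [exp_eq_exp_re_smul_exp_im (q t), smul_mul_assoc, mul_add, mul_coe_eq_smul, smul_add,
    smul_smul]
  abel

theorem deriv_exp_quaternion_curve (q : ℝ → Quaternion ℝ)
    (hdiff : Differentiable ℝ q) (hv : ∀ t, (q t).im ≠ 0) (t : ℝ) :
    NormedSpace.exp (-(q t)) * deriv (fun s => NormedSpace.exp (q s)) t =
      deriv q t
        + (1 - Real.sin (2 * ‖(q t).im‖) / (2 * ‖(q t).im‖)) •
            (qdot (‖(q t).im‖⁻¹ • (q t).im) (deriv q t).im • (‖(q t).im‖⁻¹ • (q t).im)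
              - (deriv q t).im)
        - ((1 - Real.cos (2 * ‖(q t).im‖)) / (2 * ‖(q t).im‖)) •
            qcross (‖(q t).im‖⁻¹ • (q t).im) (deriv q t).im := by
  rw [((hdiff t).hasDerivAt.quaternion_exp (hv t)).deriv, ← mul_assoc, exp_neg_mul_exp, one_mul,
    dexpIm, ← add_sub_assoc, ← add_assoc, re_add_im]
end
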